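/- For the Pauli-6 inverse channel M⁻¹(X) = 3X − tr(X)·I, the classical shadow ρ̂ = M⁻¹(|ψ_a⟩⟨ψ_a|) is an unbiased estimator: for any single-qubit density matrix ρ, Σ_a tr(ρ M_a) · M⁻¹(|ψ_a⟩⟨ψ_a|) = ρ, where M_a = (1/3)|ψ_a⟩⟨ψ_a| ranges over the six Pauli eigenstates. -/

import Mathlib

open Matrix Complex
open scoped ComplexOrder

noncomputable def ket0 : Fin 2 → ℂ := ![1, 0]
noncomputable def ket1 : Fin 2 → ℂ := ![0, 1]
noncomputable def ketP : Fin 2 → ℂ := ![(Real.sqrt 2)⁻¹, (Real.sqrt 2)⁻¹]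
noncomputable def ketM : Fin 2 → ℂ := ![(Real.sqrt 2)⁻¹, -(Real.sqrt 2)⁻¹]
noncomputable def ketL : Fin 2 → ℂ := ![(Real.sqrt 2)⁻¹, Complex.I * (Real.sqrt 2)⁻¹]
noncomputable def ketR : Fin 2 → ℂ := ![(Real.sqrt 2)⁻¹, -Complex.I * (Real.sqrt 2)⁻¹]

/-- The rank-one projector |ψ⟩⟨ψ|. -/
noncomputable def proj (ψ : Fin 2 → ℂ) : Matrix (Fin 2) (Fin 2) ℂ :=
  Matrix.vecMulVec ψ (star ψ)

noncomputable def sx : Matrix (Fin 2) (Fin 2) ℂ := !![0, 1; 1, 0]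
noncomputable def sy : Matrix (Fin 2) (Fin 2) ℂ := !![0, -Complex.I; Complex.I, 0]
noncomputable def sz : Matrix (Fin 2) (Fin 2) ℂ := !![1, 0; 0, -1]

/-- The six Pauli eigenstates. -/
noncomputable def ψ6 : Fin 6 → (Fin 2 → ℂ) := ![ket0, ket1, ketP, ketM, ketL, ketR]

/-- The Pauli-6 POVM elements. -/
noncomputable def M6 (a : Fin 6) : Matrix (Fin 2) (Fin 2) ℂ := (3 : ℂ)⁻¹ • proj (ψ6 a)

/-- The inverse of the Pauli-6 measurement channel: `M⁻¹(X) = 3X − tr(X)·I`. -/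
noncomputable def Minv (X : Matrix (Fin 2) (Fin 2) ℂ) : Matrix (Fin 2) (Fin 2) ℂ :=
  (3 : ℂ) • X - X.trace • 1

/-! Averaging `|ψₐ⟩⟨ψₐ|` against the outcome probabilities `tr(X Mₐ)` depolarizes:
each antipodal pair of Pauli eigenstates `½(1 ± σ)` contributes `½(tr X · 1 + tr(Xσ) σ)`, and the
three Pauli components reassemble `X`, giving `(X + tr X · 1)/3`. `Minv` inverts this map, and
being linear it commutes with the average. -/

section
variable {n 𝕜 : Type*} [Fintype n] [DecidableEq n] [Field 𝕜] [CharZero 𝕜]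

lemma trace_mul_smul_half_one_add_add_half_one_sub (X σ : Matrix n n 𝕜) :
    (X * ((2 : 𝕜)⁻¹ • (1 + σ))).trace • ((2 : 𝕜)⁻¹ • (1 + σ)) +
      (X * ((2 : 𝕜)⁻¹ • (1 - σ))).trace • ((2 : 𝕜)⁻¹ • (1 - σ)) =
      (2 : 𝕜)⁻¹ • (X.trace • 1 + (X * σ).trace • σ) := by
  simp only [mul_smul_comm, mul_add, mul_sub, mul_one, trace_smul, trace_add, trace_sub,
    smul_eq_mul]
  module

end

lemma sq_ofReal_sqrt_two : ((Real.sqrt 2 : ℝ) : ℂ) ^ 2 = 2 := by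
  rw [← ofReal_pow, Real.sq_sqrt zero_le_two, ofReal_ofNat]

lemma proj_ket0 : proj ket0 = (2 : ℂ)⁻¹ • (1 + sz) := by
  ext i j; fin_cases i <;> fin_cases j <;> norm_num [proj, ket0, sz, vecMulVec_apply]

lemma proj_ket1 : proj ket1 = (2 : ℂ)⁻¹ • (1 - sz) := by
  ext i j; fin_cases i <;> fin_cases j <;> norm_num [proj, ket1, sz, vecMulVec_apply]

lemma proj_ketP : proj ketP = (2 : ℂ)⁻¹ • (1 + sx) := by
  ext i j; fin_cases i <;> fin_cases j <;> simp [proj, ketP, sx, vecMulVec_apply] <;>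
    field_simp <;> simp [sq_ofReal_sqrt_two]

lemma proj_ketM : proj ketM = (2 : ℂ)⁻¹ • (1 - sx) := by
  ext i j; fin_cases i <;> fin_cases j <;> simp [proj, ketM, sx, vecMulVec_apply] <;>
    field_simp <;> simp [sq_ofReal_sqrt_two]

lemma proj_ketL : proj ketL = (2 : ℂ)⁻¹ • (1 + sy) := by
  ext i j; fin_cases i <;> fin_cases j <;> simp [proj, ketL, sy, vecMulVec_apply] <;>
    field_simp <;> simp [sq_ofReal_sqrt_two]

lemma proj_ketR : proj ketR = (2 : ℂ)⁻¹ • (1 - sy) := by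
  ext i j; fin_cases i <;> fin_cases j <;> simp [proj, ketR, sy, vecMulVec_apply] <;>
    field_simp <;> simp [sq_ofReal_sqrt_two]

lemma pauli_decomposition (X : Matrix (Fin 2) (Fin 2) ℂ) :
    X = (2 : ℂ)⁻¹ • (X.trace • 1 + (X * sx).trace • sx + (X * sy).trace • sy +
      (X * sz).trace • sz) := by
  ext i j; fin_cases i <;> fin_cases j <;>
    simp [trace_fin_two, mul_apply, sx, sy, sz] <;> ring_nf <;> simp [I_sq] <;> ring

lemma Minv_sum_smul {ι : Type*} (s : Finset ι) (c : ι → ℂ) (X : ι → Matrix (Fin 2) (Fin 2) ℂ) :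
    Minv (∑ i ∈ s, c i • X i) = ∑ i ∈ s, c i • Minv (X i) := by
  simp [Minv, smul_sub, Finset.sum_sub_distrib, Finset.smul_sum, trace_sum, Finset.sum_smul,
    smul_smul, mul_comm]

lemma Minv_inv_three_smul_add_trace_smul_one (X : Matrix (Fin 2) (Fin 2) ℂ) :
    Minv ((3 : ℂ)⁻¹ • (X + X.trace • 1)) = X := by
  simp only [Minv, trace_smul, trace_add, trace_one, Fintype.card_fin, smul_eq_mul]
  module

noncomputable def pauli6Channel (X : Matrix (Fin 2) (Fin 2) ℂ) : Matrix (Fin 2) (Fin 2) ℂ :=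
  ∑ a, (X * M6 a).trace • proj (ψ6 a)

lemma pauli6Channel_eq (X : Matrix (Fin 2) (Fin 2) ℂ) :
    pauli6Channel X = (3 : ℂ)⁻¹ • (X + X.trace • 1) := by
  have hM6 (a : Fin 6) : (X * M6 a).trace = (3 : ℂ)⁻¹ * (X * proj (ψ6 a)).trace := by
    rw [M6, mul_smul_comm, trace_smul, smul_eq_mul]
  calc pauli6Channel X
      = (3 : ℂ)⁻¹ • ((X * proj ket0).trace • proj ket0 + (X * proj ket1).trace • proj ket1 +
          ((X * proj ketP).trace • proj ketP + (X * proj ketM).trace • proj ketM) +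
          ((X * proj ketL).trace • proj ketL + (X * proj ketR).trace • proj ketR)) := by
        simp only [pauli6Channel, hM6, Fin.sum_univ_six, ← smul_smul, ← Finset.smul_sum]
        simp [ψ6, add_assoc]
    _ = (3 : ℂ)⁻¹ • ((2 : ℂ)⁻¹ • (X.trace • 1 + (X * sz).trace • sz) +
          (2 : ℂ)⁻¹ • (X.trace • 1 + (X * sx).trace • sx) +
          (2 : ℂ)⁻¹ • (X.trace • 1 + (X * sy).trace • sy)) := by
        simp only [proj_ket0, proj_ket1, proj_ketP, proj_ketM, proj_ketL, proj_ketR,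
          trace_mul_smul_half_one_add_add_half_one_sub]
    _ = (3 : ℂ)⁻¹ • (X + X.trace • 1) := by
        linear_combination (norm := module) (-(3 : ℂ)⁻¹) • pauli_decomposition X

lemma Minv_pauli6Channel (X : Matrix (Fin 2) (Fin 2) ℂ) : Minv (pauli6Channel X) = X := by
  rw [pauli6Channel_eq, Minv_inv_three_smul_add_trace_smul_one]

theorem pauli6_shadow_unbiased_general (ρ : Matrix (Fin 2) (Fin 2) ℂ) :
    ∑ a : Fin 6, (ρ * M6 a).trace • Minv (proj (ψ6 a)) = ρ := by
  rw [← Minv_sum_smul]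
  exact Minv_pauli6Channel ρ

/-- The Pauli-6 classical shadow is an unbiased estimator: for any density
matrix ρ, $\sum_a tr(ρ M_a)\, \mathcal M^{-1}(|ψ_a⟩⟨ψ_a|) = ρ$. -/
theorem pauli6_shadow_unbiased (ρ : Matrix (Fin 2) (Fin 2) ℂ)
    (hρ : ρ.PosSemidef) (htr : ρ.trace = 1) :
    ∑ a : Fin 6, (ρ * M6 a).trace • Minv (proj (ψ6 a)) = ρ :=
  pauli6_shadow_unbiased_general ρ
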